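/- Let W be a finite Coxeter group and u, v ∈ W. Writing T_u T_v = Σ_{w ∈ W} a_w T_w in the Hecke algebra H_q, the support supp(T_u T_v) = { w ∈ W : a_w ≠ 0 } has unique minimal element u v and unique maximal element u ∘ v with respect to the strong Bruhat order, where ∘ is the Demazure product. -/

import Mathlib

open Polynomial

namespace PaperBase

variable {B : Type*} {W : Type*} [Group W] {M : CoxeterMatrix B} (cs : CoxeterSystem M W)

/-- The strong Bruhat order: `u ≤ w` iff some reduced word for `w` has a sublist that is a
reduced word for `u`. -/
def BruhatLE (u w : W) : Prop :=
  ∃ ω : List B, cs.IsReduced ω ∧ cs.wordProd ω = w ∧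
    ∃ ω' : List B, ω'.Sublist ω ∧ cs.IsReduced ω' ∧ cs.wordProd ω' = u

/-- The strict strong Bruhat order. -/
def BruhatLT (u w : W) : Prop := BruhatLE cs u w ∧ u ≠ w

/-- The right weak Bruhat order: `u ≤_R w` iff `ℓ(w) = ℓ(u) + ℓ(u⁻¹ w)`. -/
def RWeakLE (u w : W) : Prop := cs.length w = cs.length u + cs.length (u⁻¹ * w)

/-- `U_ω ↑ v` along a word `ω`. -/
noncomputable def upLWord (ω : List B) (v : W) : W :=
  ω.foldr (fun i x => if cs.length x < cs.length (cs.simple i * x) then cs.simple i * x else x) v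

/-- `U_ω ↓ v` along a word `ω`. -/
noncomputable def downLWord (ω : List B) (v : W) : W :=
  ω.foldr (fun i x => if cs.length (cs.simple i * x) < cs.length x then cs.simple i * x else x) v

/-- `v ↑ U_ω` along a word `ω`. -/
noncomputable def upRWord (v : W) (ω : List B) : W :=
  ω.foldl (fun x i => if cs.length x < cs.length (x * cs.simple i) then x * cs.simple i else x) v

/-- `v ↓ U_ω` along a word `ω`. -/
noncomputable def downRWord (v : W) (ω : List B) : W :=
  ω.foldl (fun x i => if cs.length (x * cs.simple i) < cs.length x then x * cs.simple i else x) v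

/-- A chosen reduced word for `w`. -/
noncomputable def rword (w : W) : List B := (cs.exists_reduced_word' w).choose

theorem rword_isReduced (w : W) : cs.IsReduced (rword cs w) :=
  (cs.exists_reduced_word' w).choose_spec.1

theorem rword_wordProd (w : W) : cs.wordProd (rword cs w) = w :=
  ((cs.exists_reduced_word' w).choose_spec.2).symm

/-- `U_w ↑ v` for `w : W`, computed along a chosen reduced word for `w`. -/
noncomputable def upL (w v : W) : W := upLWord cs (rword cs w) v

/-- `U_w ↓ v` for `w : W`. -/
noncomputable def downL (w v : W) : W := downLWord cs (rword cs w) v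

/-- `v ↑ U_w` for `w : W`. -/
noncomputable def upR (v w : W) : W := upRWord cs v (rword cs w)

/-- `v ↓ U_w` for `w : W`. -/
noncomputable def downR (v w : W) : W := downRWord cs v (rword cs w)

/-- The Demazure (0-Hecke) product `u ∘ w`. -/
noncomputable def dem (u w : W) : W := upRWord cs u (rword cs w)

/-- Left multiplication by the Hecke algebra generator `T_{s i}` on the free
`ℤ[q]`-module with basis `{T_w}`, realized as `W →₀ ℤ[q]`:
`T_s T_w = T_{sw}` if `sw > w`, and `T_s T_w = (q-1) T_w + q T_{sw}` if `sw < w`. -/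
noncomputable def heckeMulSimple (i : B) (f : W →₀ Polynomial ℤ) : W →₀ Polynomial ℤ :=
  f.sum fun w c =>
    if cs.length w < cs.length (cs.simple i * w)
    then Finsupp.single (cs.simple i * w) c
    else Finsupp.single w ((X - 1) * c) + Finsupp.single (cs.simple i * w) (X * c)

/-- Left multiplication by `T_{π ω}` along a word `ω`. -/
noncomputable def heckeMulWord (ω : List B) (f : W →₀ Polynomial ℤ) : W →₀ Polynomial ℤ :=
  ω.foldr (heckeMulSimple cs) f

/-- The product `T_x T_y` in the Hecke algebra, expanded in the basis `{T_w}`. -/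
noncomputable def TT (x y : W) : W →₀ Polynomial ℤ :=
  heckeMulWord cs (rword cs x) (Finsupp.single y 1)

open Classical in
/-- The linear functional `Λ_w` with `Λ_w (T_y) = q^{ℓ(y)}` if `y ≤ w`, else `0`. -/
noncomputable def Lam (w : W) (f : W →₀ Polynomial ℤ) : Polynomial ℤ :=
  f.sum fun y c => if BruhatLE cs y w then X ^ cs.length y * c else 0

/-- `Θ(x, y, w) = Λ_w (T_x T_{y⁻¹})`. -/
noncomputable def Theta (x y w : W) : Polynomial ℤ := Lam cs w (TT cs x y⁻¹)


open List CoxeterSystem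

open scoped Classical

/-! ### The sign action and the reflection machinery -/

noncomputable def sigmaFun (i : B) : W × ℤˣ → W × ℤˣ :=
  fun p => (cs.simple i * p.1 * cs.simple i, if p.1 = cs.simple i then -p.2 else p.2)

theorem simple_conj_eq_iff (i : B) (t : W) :
    (cs.simple i * t * cs.simple i = cs.simple i) ↔ t = cs.simple i := by
  have hs := cs.simple_mul_simple_self i
  constructor
  · intro h
    calc t = (cs.simple i * cs.simple i) * t * (cs.simple i * cs.simple i) := by
            rw [hs]; group
      _ = cs.simple i * (cs.simple i * t * cs.simple i) * cs.simple i := by group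
      _ = cs.simple i * cs.simple i * cs.simple i := by rw [h]
      _ = cs.simple i := by rw [hs, one_mul]
  · intro h; rw [h, hs, one_mul]

theorem sigmaFun_involutive (i : B) : Function.Involutive (sigmaFun cs i) := by
  rintro ⟨t, e⟩
  have hs := cs.simple_mul_simple_self i
  have h1 : cs.simple i * (cs.simple i * t * cs.simple i) * cs.simple i = t := by
    calc cs.simple i * (cs.simple i * t * cs.simple i) * cs.simple i
        = (cs.simple i * cs.simple i) * t * (cs.simple i * cs.simple i) := by group
      _ = t := by rw [hs]; group
  simp only [sigmaFun]
  by_cases ht : t = cs.simple i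
  · simp [ht, simple_conj_eq_iff, h1, hs, one_mul]
  · simp only [h1, simple_conj_eq_iff cs i t, ht, if_neg, if_false]

noncomputable def sigma (i : B) : Equiv.Perm (W × ℤˣ) :=
  Function.Involutive.toPerm _ (sigmaFun_involutive cs i)

theorem sigma_apply (i : B) (t : W) (e : ℤˣ) :
    sigma cs i (t, e) = (cs.simple i * t * cs.simple i, if t = cs.simple i then -e else e) := rfl

theorem rightInvSeq_cons' (i : B) (ω : List B) :
    cs.rightInvSeq (i :: ω) =
      ((cs.wordProd ω)⁻¹ * cs.simple i * cs.wordProd ω) :: cs.rightInvSeq ω := rfl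

theorem prod_sigma_apply (ω : List B) (t : W) (e : ℤˣ) :
    ((ω.map (sigma cs)).prod) (t, e) =
      (cs.wordProd ω * t * (cs.wordProd ω)⁻¹, e * (-1) ^ ((cs.rightInvSeq ω).count t)) := by
  induction ω generalizing t e with
  | nil => simp [wordProd_nil]
  | cons i ω ih =>
    rw [map_cons, prod_cons, Equiv.Perm.mul_apply, ih, sigma_apply, rightInvSeq_cons',
      List.count_cons]
    have hcond : (cs.wordProd ω * t * (cs.wordProd ω)⁻¹ = cs.simple i)
        ↔ ((cs.wordProd ω)⁻¹ * cs.simple i * cs.wordProd ω = t) := by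
      constructor
      · intro h; rw [← h]; group
      · intro h; rw [← h]; group
    rw [cs.wordProd_cons, Prod.mk.injEq]
    constructor
    · rw [mul_inv_rev, cs.inv_simple]; group
    · simp only [beq_iff_eq]
      by_cases hc : (cs.wordProd ω)⁻¹ * cs.simple i * cs.wordProd ω = t
      · rw [if_pos (hcond.mpr hc), if_pos hc, pow_add, pow_one]
        rw [mul_neg_one, mul_neg]
      · rw [if_neg (fun h => hc (hcond.mp h)), if_neg hc, add_zero]

/-! ### Lifting the sign action to W -/

theorem alternatingWord_add (i j : B) (m r : ℕ) :
    alternatingWord i j (r + m) =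
      (if Even r then alternatingWord i j m else alternatingWord j i m) ++ alternatingWord i j r := by
  induction m with
  | zero => simp [alternatingWord]
  | succ m ih =>
    have h1 : r + (m + 1) = (r + m) + 1 := by omega
    rw [h1, alternatingWord_succ' i j (r + m), ih]
    by_cases hr : Even r <;> by_cases hm : Even m <;>
      simp [hr, hm, Nat.even_add, alternatingWord_succ', cons_append]

theorem wordProd_altW_shift (i j : B) (r : ℕ) :
    cs.wordProd (alternatingWord i j (r + M i j)) =
      cs.wordProd (alternatingWord i j (M i j)) * cs.wordProd (alternatingWord i j r) := by
  rw [alternatingWord_add]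
  by_cases hr : Even r
  · rw [if_pos hr, cs.wordProd_append]
  · rw [if_neg hr, cs.wordProd_append]
    congr 1
    have h1 := cs.wordProd_braidWord_eq j i
    unfold CoxeterSystem.braidWord at h1
    rw [M.symmetric j i] at h1
    exact h1

noncomputable def ent (i j : B) (r : ℕ) : W :=
  (cs.wordProd (alternatingWord i j r))⁻¹ * cs.wordProd (alternatingWord i j (r + 1))

theorem ent_shift (i j : B) (r : ℕ) : ent cs i j (r + M i j) = ent cs i j r := by
  unfold ent
  rw [wordProd_altW_shift, show r + M i j + 1 = (r + 1) + M i j by omega, wordProd_altW_shift]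
  group

theorem getD_ris_altW (i j : B) (n : ℕ) : ∀ k, k < n →
    (cs.rightInvSeq (alternatingWord i j n)).getD k 1 = ent cs i j (n - 1 - k) := by
  induction n with
  | zero => exact fun k hk => absurd hk (Nat.not_lt_zero k)
  | succ n ih =>
    intro k hk
    rw [alternatingWord_succ' i j n, rightInvSeq_cons']
    cases k with
    | zero =>
      rw [List.getD_cons_zero]
      unfold ent
      have h2 : cs.wordProd (alternatingWord i j (n + 1)) =
          cs.simple (if Even n then j else i) * cs.wordProd (alternatingWord i j n) := by
        rw [alternatingWord_succ', cs.wordProd_cons]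
      rw [show n + 1 - 1 - 0 = n by omega, h2, mul_assoc]
    | succ k =>
      rw [List.getD_cons_succ, ih k (by omega), show n + 1 - 1 - (k + 1) = n - 1 - k by omega]

theorem ris_altW_double (i j : B) :
    cs.rightInvSeq (alternatingWord i j (2 * M i j)) =
      cs.rightInvSeq (alternatingWord i j (M i j)) ++
        cs.rightInvSeq (alternatingWord i j (M i j)) := by
  set m := M i j with hm
  have hlen : ∀ n, (cs.rightInvSeq (alternatingWord i j n)).length = n := by
    intro n; rw [cs.length_rightInvSeq, length_alternatingWord]
  apply List.ext_getElem
  · rw [hlen, List.length_append, hlen]; omega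
  · intro k h1 h2
    rw [← List.getD_eq_getElem _ 1, getD_ris_altW cs i j _ k (by rwa [hlen] at h1)]
    rw [hlen] at h1
    by_cases hk : k < m
    · rw [List.getElem_append_left (by rw [hlen]; omega)]
      rw [← List.getD_eq_getElem _ 1, getD_ris_altW cs i j _ k (by omega)]
      rw [show 2 * m - 1 - k = (m - 1 - k) + m by omega, ent_shift]
    · rw [List.getElem_append_right (by rw [hlen]; omega)]
      rw [← List.getD_eq_getElem _ 1, getD_ris_altW cs i j _ _ (by rw [hlen]; omega)]
      rw [hlen]
      congr 1
      omega

theorem prod_sigma_altW_eq_pow (i j : B) (m : ℕ) :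
    ((alternatingWord i j (2 * m)).map (sigma cs)).prod = (sigma cs i * sigma cs j) ^ m := by
  induction m with
  | zero => simp [alternatingWord]
  | succ m ih =>
    have h2 : 2 * (m + 1) = (2 * m + 1) + 1 := by ring
    have he1 : ¬ Even (2 * m + 1) := by simp [Nat.even_add_one]
    have he2 : Even (2 * m) := even_two_mul m
    rw [h2, alternatingWord_succ' i j (2 * m + 1), alternatingWord_succ' i j (2 * m),
      if_neg he1, if_pos he2, map_cons, map_cons, prod_cons, prod_cons, ih,
      pow_succ', mul_assoc]

theorem sigma_liftable : CoxeterMatrix.IsLiftable M (sigma cs) := by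
  intro i j
  rcases Nat.eq_zero_or_pos (M i j) with h0 | hpos
  · rw [h0, pow_zero]
  · rw [← prod_sigma_altW_eq_pow]
    apply Equiv.ext
    rintro ⟨t, e⟩
    rw [prod_sigma_apply]
    have hπ : cs.wordProd (alternatingWord i j (2 * M i j)) = 1 := by
      rw [cs.prod_alternatingWord_eq_mul_pow]
      rw [if_pos (even_two_mul _), Nat.mul_div_cancel_left _ (by norm_num : 0 < 2),
        cs.simple_mul_simple_pow, one_mul]
    have hcount : Even ((cs.rightInvSeq (alternatingWord i j (2 * M i j))).count t) := by
      rw [ris_altW_double, List.count_append]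
      exact ⟨_, rfl⟩
    rw [hπ, Even.neg_one_pow hcount, mul_one]
    simp

noncomputable def phi : W →* Equiv.Perm (W × ℤˣ) := cs.lift ⟨sigma cs, sigma_liftable cs⟩

theorem phi_simple (i : B) : phi cs (cs.simple i) = sigma cs i :=
  cs.lift_apply_simple (sigma_liftable cs) i

theorem phi_wordProd (ω : List B) (t : W) (e : ℤˣ) :
    phi cs (cs.wordProd ω) (t, e) =
      (cs.wordProd ω * t * (cs.wordProd ω)⁻¹, e * (-1) ^ ((cs.rightInvSeq ω).count t)) := by
  have h : phi cs (cs.wordProd ω) = ((ω.map (sigma cs)).prod) := by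
    induction ω with
    | nil => rw [wordProd_nil, map_one]; rfl
    | cons i ω ih => rw [cs.wordProd_cons, map_mul, phi_simple, ih, map_cons, prod_cons]
  rw [h, prod_sigma_apply]

noncomputable def etaR (w t : W) : ℤˣ := (phi cs w (t, 1)).2

theorem etaR_eq_count (ω : List B) (t : W) :
    etaR cs (cs.wordProd ω) t = (-1) ^ ((cs.rightInvSeq ω).count t) := by
  unfold etaR
  rw [phi_wordProd, one_mul]

theorem phi_apply (w t : W) (e : ℤˣ) : phi cs w (t, e) = (w * t * w⁻¹, e * etaR cs w t) := by
  obtain ⟨ω, rfl⟩ := cs.wordProd_surjective w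
  rw [phi_wordProd, etaR_eq_count]

theorem etaR_mul (u v t : W) : etaR cs (u * v) t = etaR cs u (v * t * v⁻¹) * etaR cs v t := by
  have h : phi cs (u * v) (t, 1) = phi cs u (phi cs v (t, 1)) := by
    rw [map_mul]; rfl
  rw [phi_apply cs v t 1, phi_apply cs u (v * t * v⁻¹) (1 * etaR cs v t),
      phi_apply cs (u * v) t 1] at h
  have h2 := congrArg Prod.snd h
  simp only [one_mul] at h2
  rw [h2, mul_comm]

theorem etaR_one (t : W) : etaR cs 1 t = 1 := by unfold etaR; rw [map_one]; rfl

theorem etaR_simple (i : B) (t : W) :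
    etaR cs (cs.simple i) t = if t = cs.simple i then -1 else 1 := by
  unfold etaR
  rw [phi_simple, sigma_apply]

theorem etaR_inv_rel (w x : W) : etaR cs w x * etaR cs w⁻¹ (w * x * w⁻¹) = 1 := by
  have h := etaR_mul cs w w⁻¹ (w * x * w⁻¹)
  rw [mul_inv_cancel, etaR_one] at h
  have h2 : w⁻¹ * (w * x * w⁻¹) * w⁻¹⁻¹ = x := by group
  rw [h2] at h
  exact h.symm

theorem etaR_refl_self {t : W} (ht : cs.IsReflection t) : etaR cs t t = -1 := by
  obtain ⟨w, i, rfl⟩ := ht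
  set t := w * cs.simple i * w⁻¹ with hdef
  have hsplit : t = w * (cs.simple i * w⁻¹) := by rw [hdef]; group
  have h1 := etaR_mul cs w (cs.simple i * w⁻¹) t
  rw [← hsplit] at h1
  have h2 : cs.simple i * w⁻¹ * t * (cs.simple i * w⁻¹)⁻¹ = cs.simple i := by
    rw [hdef, mul_inv_rev, inv_inv, cs.inv_simple]
    calc cs.simple i * w⁻¹ * (w * cs.simple i * w⁻¹) * (w * cs.simple i)
        = cs.simple i * (w⁻¹ * w) * cs.simple i * (w⁻¹ * w) * cs.simple i := by group
      _ = cs.simple i * cs.simple i * cs.simple i := by rw [inv_mul_cancel]; group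
      _ = cs.simple i := by rw [cs.simple_mul_simple_self, one_mul]
  have h3 := etaR_mul cs (cs.simple i) w⁻¹ t
  have h4 : w⁻¹ * t * w⁻¹⁻¹ = cs.simple i := by
    rw [hdef]; group
  rw [h4] at h3
  have h5 : etaR cs (cs.simple i) (cs.simple i) = -1 := by
    rw [etaR_simple, if_pos rfl]
  have h6 : etaR cs w (cs.simple i) * etaR cs w⁻¹ t = 1 := by
    have h7 := etaR_inv_rel cs w (cs.simple i)
    rw [← hdef] at h7
    exact h7
  rw [h1, h2, h3, h5]
  calc etaR cs w (cs.simple i) * (-1 * etaR cs w⁻¹ t)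
      = -1 * (etaR cs w (cs.simple i) * etaR cs w⁻¹ t) := by
        rw [← mul_assoc, mul_comm (etaR cs w (cs.simple i)) (-1 : ℤˣ), mul_assoc]
    _ = -1 := by rw [h6, mul_one]

theorem descent_of_etaR {w t : W} (h : etaR cs w t = -1) :
    cs.length (w * t) < cs.length w := by
  obtain ⟨ω, hred, hw⟩ := cs.exists_reduced_word' w
  rw [hw] at h ⊢
  rw [etaR_eq_count] at h
  have hne : (cs.rightInvSeq ω).count t ≠ 0 := by
    intro h0
    rw [h0, pow_zero] at h
    exact (by decide : (1 : ℤˣ) ≠ -1) h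
  have hmem : t ∈ cs.rightInvSeq ω := by
    by_contra hmem
    exact hne (List.count_eq_zero.mpr hmem)
  exact (cs.isRightInversion_of_mem_rightInvSeq hred hmem).2

theorem etaR_neg_iff {t : W} (ht : cs.IsReflection t) (w : W) :
    etaR cs w t = -1 ↔ cs.length (w * t) < cs.length w := by
  constructor
  · exact descent_of_etaR cs
  · intro hlt
    rcases Int.units_eq_one_or (etaR cs w t) with h1 | h1
    · exfalso
      have h2 : etaR cs (w * t) t = -1 := by
        rw [etaR_mul]
        have : t * t * t⁻¹ = t := by rw [ht.mul_self, one_mul, ht.inv]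
        rw [this, h1, etaR_refl_self cs ht, one_mul]
      have h3 := descent_of_etaR cs h2
      rw [mul_assoc, ht.mul_self, mul_one] at h3
      omega
    · exact h1

theorem rightExchange {ω : List B} {t : W} (ht : cs.IsReflection t)
    (hlt : cs.length (cs.wordProd ω * t) < cs.length (cs.wordProd ω)) :
    ∃ j < ω.length, cs.wordProd ω * t = cs.wordProd (ω.eraseIdx j) := by
  have h1 : etaR cs (cs.wordProd ω) t = -1 := (etaR_neg_iff cs ht _).mpr hlt
  rw [etaR_eq_count] at h1
  have hne : (cs.rightInvSeq ω).count t ≠ 0 := by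
    intro h0
    rw [h0, pow_zero] at h1
    exact (by decide : (1 : ℤˣ) ≠ -1) h1
  have hmem : t ∈ cs.rightInvSeq ω := by
    by_contra hmem
    exact hne (List.count_eq_zero.mpr hmem)
  obtain ⟨j, hj, hjt⟩ := List.getElem_of_mem hmem
  have hjlen : j < ω.length := by
    rw [← cs.length_rightInvSeq ω]; exact hj
  refine ⟨j, hjlen, ?_⟩
  have h2 := cs.wordProd_mul_getD_rightInvSeq ω j
  rw [List.getD_eq_getElem _ 1 hj, hjt] at h2
  exact h2


/-! ### Bruhat order theory -/

theorem leftExchange {ω : List B} {t : W} (ht : cs.IsReflection t)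
    (hlt : cs.length (t * cs.wordProd ω) < cs.length (cs.wordProd ω)) :
    ∃ κ, κ.Sublist ω ∧ κ.length + 1 = ω.length ∧ t * cs.wordProd ω = cs.wordProd κ := by
  have h1 : cs.length (cs.wordProd ω.reverse * t) < cs.length (cs.wordProd ω.reverse) := by
    rw [cs.wordProd_reverse]
    have e1 : ((cs.wordProd ω)⁻¹ * t) = (t * cs.wordProd ω)⁻¹ := by
      rw [mul_inv_rev, ht.inv]
    rw [e1, cs.length_inv, cs.length_inv]
    exact hlt
  obtain ⟨j, hj, heq⟩ := rightExchange cs ht h1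
  refine ⟨(ω.reverse.eraseIdx j).reverse, ?_, ?_, ?_⟩
  · have h2 : (ω.reverse.eraseIdx j) <+ ω.reverse := List.eraseIdx_sublist _ j
    have h3 := h2.reverse
    rwa [List.reverse_reverse] at h3
  · rw [List.length_reverse, List.length_eraseIdx_add_one (by rwa [List.length_reverse] at hj ⊢),
      List.length_reverse]
  · have h4 := congrArg (·⁻¹) heq
    simp only [mul_inv_rev, ht.inv, cs.wordProd_reverse, inv_inv] at h4
    rw [h4, ← cs.wordProd_reverse]

theorem exists_reduced_sublist_aux : ∀ n (ω : List B), ω.length ≤ n →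
    ∃ κ, κ.Sublist ω ∧ cs.IsReduced κ ∧ cs.wordProd κ = cs.wordProd ω := by
  intro n
  induction n with
  | zero =>
    intro ω hω
    have : ω = [] := List.eq_nil_of_length_eq_zero (by omega)
    subst this
    exact ⟨[], List.Sublist.refl _, by simp [CoxeterSystem.IsReduced, wordProd_nil], rfl⟩
  | succ n ih =>
    intro ω hω
    cases ω with
    | nil => exact ⟨[], List.Sublist.refl _, by simp [CoxeterSystem.IsReduced, wordProd_nil], rfl⟩
    | cons a ω' =>
      obtain ⟨κ', hsub', hred', hprod'⟩ := ih ω' (by simp at hω; omega)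
      by_cases hred : cs.IsReduced (a :: κ')
      · refine ⟨a :: κ', hsub'.cons₂ a, hred, ?_⟩
        rw [cs.wordProd_cons, cs.wordProd_cons, hprod']
      · have hlt : cs.length (cs.simple a * cs.wordProd κ') < cs.length (cs.wordProd κ') := by
        
          rcases cs.length_simple_mul (cs.wordProd κ') a with h | h
          · exfalso
            apply hred
            show cs.length (cs.wordProd (a :: κ')) = (a :: κ').length
            rw [cs.wordProd_cons, h, List.length_cons]
            rw [hred']
          · omega
        obtain ⟨κ₀, hsub₀, hlen₀, heq₀⟩ := leftExchange cs (cs.isReflection_simple a) hlt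
        have hκ₀len : κ₀.length ≤ n := by
          have h5 := hsub'.length_le
          simp at hω
          omega
        obtain ⟨κ, hsubκ, hredκ, hprodκ⟩ := ih κ₀ hκ₀len
        refine ⟨κ, (hsubκ.trans hsub₀).trans (hsub'.trans (List.sublist_cons_self a ω')), hredκ, ?_⟩
        rw [hprodκ, ← heq₀, cs.wordProd_cons, hprod']

theorem exists_reduced_sublist (ω : List B) :
    ∃ κ, κ.Sublist ω ∧ cs.IsReduced κ ∧ cs.wordProd κ = cs.wordProd ω :=
  exists_reduced_sublist_aux cs ω.length ω le_rfl

theorem bruhatLE_of_sublist {μ ω : List B} (h : μ.Sublist ω) (hω : cs.IsReduced ω) :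
    BruhatLE cs (cs.wordProd μ) (cs.wordProd ω) := by
  obtain ⟨κ, h1, h2, h3⟩ := exists_reduced_sublist cs μ
  exact ⟨ω, hω, rfl, κ, h1.trans h, h2, h3⟩

theorem bruhatLE_refl (w : W) : BruhatLE cs w w := by
  obtain ⟨ω, h1, h2⟩ := cs.exists_reduced_word' w
  exact ⟨ω, h1, h2.symm, ω, List.Sublist.refl ω, h1, h2.symm⟩

/-- Chains of reflections going up in length. -/
inductive LeT (cs : CoxeterSystem M W) : W → W → Prop
  | refl (w : W) : LeT cs w w
  | step {u x t : W} : LeT cs u x → cs.IsReflection t →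
      cs.length x < cs.length (x * t) → LeT cs u (x * t)

theorem LeT.trans' {u v w : W} (h1 : LeT cs u v) (h2 : LeT cs v w) : LeT cs u w := by
  induction h2 with
  | refl => exact h1
  | step _ ht hl ih => exact LeT.step ih ht hl

theorem mul_refl_mul_self {t : W} (ht : cs.IsReflection t) (x : W) : x * t * t = x := by
  rw [mul_assoc, ht.mul_self, mul_one]

theorem leT_subword_aux : ∀ n, ∀ w : W, cs.length w ≤ n → ∀ u, LeT cs u w →
    ∀ ω, cs.IsReduced ω → cs.wordProd ω = w →
    ∃ μ, μ.Sublist ω ∧ cs.IsReduced μ ∧ cs.wordProd μ = u := by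
  intro n
  induction n with
  | zero =>
    intro w hw u hle ω hω hp
    cases hle with
    | refl => exact ⟨ω, List.Sublist.refl _, hω, hp⟩
    | step h ht hl => omega
  | succ n ih =>
    intro w hw u hle ω hω hp
    cases hle with
    | refl => exact ⟨ω, List.Sublist.refl _, hω, hp⟩
    | @step x t h ht hl =>
      have hlt : cs.length (cs.wordProd ω * t) < cs.length (cs.wordProd ω) := by
        rw [hp, mul_refl_mul_self cs ht]
        exact hl
      obtain ⟨j, hj, heq⟩ := rightExchange cs ht hlt
      obtain ⟨κ, h1, h2, h3⟩ := exists_reduced_sublist cs (ω.eraseIdx j)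
      have hκx : cs.wordProd κ = x := by
        rw [h3, ← heq, hp, mul_refl_mul_self cs ht]
      have hxlen : cs.length x ≤ n := by omega
      obtain ⟨μ, m1, m2, m3⟩ := ih x hxlen u h κ h2 hκx
      exact ⟨μ, (m1.trans h1).trans (List.eraseIdx_sublist ω j), m2, m3⟩

theorem leT_subword {u w : W} (h : LeT cs u w) {ω : List B} (hω : cs.IsReduced ω)
    (hp : cs.wordProd ω = w) :
    ∃ μ, μ.Sublist ω ∧ cs.IsReduced μ ∧ cs.wordProd μ = u :=
  leT_subword_aux cs (cs.length w) w le_rfl u h ω hω hp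

theorem length_simple_mul_of_not_lt {x : W} {i : B} (h : ¬ cs.length x < cs.length (cs.simple i * x)) :
    cs.length (cs.simple i * x) + 1 = cs.length x := by
  rcases cs.length_simple_mul x i with h1 | h1
  · omega
  · exact h1

theorem isReduced_cons_of_descent {x : W} {i : B} (h : cs.length (cs.simple i * x) < cs.length x) :
    cs.IsReduced (i :: rword cs (cs.simple i * x)) ∧
      cs.wordProd (i :: rword cs (cs.simple i * x)) = x := by
  have hprod : cs.wordProd (i :: rword cs (cs.simple i * x)) = x := by
    rw [cs.wordProd_cons, rword_wordProd, cs.simple_mul_simple_cancel_left]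
  constructor
  · show cs.length (cs.wordProd _) = _
    rw [hprod, List.length_cons]
    have h2 : cs.length (cs.wordProd (rword cs (cs.simple i * x)))
        = (rword cs (cs.simple i * x)).length := rword_isReduced cs _
    rw [rword_wordProd] at h2
    rcases cs.length_simple_mul x i with h1 | h1
    · omega
    · omega
  · exact hprod

theorem liftDescT {p x : W} {i : B}
    (HA : ∀ u', BruhatLE cs u' x → LeT cs u' x)
    (hp : LeT cs p x)
    (hi1 : cs.length p < cs.length (cs.simple i * p))
    (hi2 : cs.length (cs.simple i * x) < cs.length x) :
    LeT cs (cs.simple i * p) x := by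
  obtain ⟨hred2, hprod2⟩ := isReduced_cons_of_descent cs hi2
  obtain ⟨μ, hμsub, hμred, hμprod⟩ := leT_subword cs hp hred2 hprod2
  rcases List.sublist_cons_iff.mp hμsub with hcase | ⟨μ', rfl, hsub'⟩
  · refine HA _ ⟨i :: rword cs (cs.simple i * x), hred2, hprod2, i :: μ, hcase.cons₂ i, ?_, ?_⟩
    · show cs.length (cs.wordProd _) = _
      rw [cs.wordProd_cons, hμprod, List.length_cons]
      have : cs.length p = μ.length := by rw [← hμprod]; exact hμred
      rcases cs.length_simple_mul p i with h1 | h1 <;> omega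
    · rw [cs.wordProd_cons, hμprod]
  · exfalso
    have hμ'red : cs.IsReduced μ' := by
      have h3 : cs.IsReduced ((i :: μ').drop 1) := hμred.drop 1
      simpa using h3
    have h4 : cs.wordProd μ' = cs.simple i * p := by
      rw [← hμprod, cs.wordProd_cons, cs.simple_mul_simple_cancel_left]
    have h5 : cs.length (cs.simple i * p) = μ'.length := by rw [← h4]; exact hμ'red
    have h6 : cs.length p = μ'.length + 1 := by
      have h7 : cs.length (cs.wordProd (i :: μ')) = (i :: μ').length := hμred
      rw [hμprod] at h7
      simpa using h7
    omega


theorem liftStepT {p r : W} {i : B} (hpr : LeT cs p r) :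
    cs.length p < cs.length (cs.simple i * p) →
    cs.length r < cs.length (cs.simple i * r) →
    (∀ x u, cs.length x < cs.length r → BruhatLE cs u x → LeT cs u x) →
    LeT cs (cs.simple i * p) (cs.simple i * r) := by
  induction hpr with
  | refl => intro _ _ _; exact LeT.refl _
  | @step x t h ht hl ih =>
    intro hp hr HA
    by_cases hx : cs.length x < cs.length (cs.simple i * x)
    · have ih' := ih hp hx (fun y u hy hb => HA y u (by omega) hb)
      have hassoc : cs.simple i * (x * t) = (cs.simple i * x) * t := by rw [mul_assoc]
      rw [hassoc]
      apply LeT.step ih' ht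
      have h1 : cs.length (cs.simple i * x) = cs.length x + 1 := by
        rcases cs.length_simple_mul x i with h2 | h2 <;> omega
      have h2 : cs.length (cs.simple i * (x * t)) = cs.length (x * t) + 1 := by
        rcases cs.length_simple_mul (x * t) i with h3 | h3 <;> omega
      rw [← hassoc]
      omega
    · have hx' : cs.length (cs.simple i * x) < cs.length x := by
        rcases cs.length_simple_mul x i with h2 | h2
        · omega
        · omega
      have h1 : LeT cs (cs.simple i * p) x :=
        liftDescT cs (fun u' hb => HA x u' (by omega) hb) h hp hx'
      have h2 : LeT cs (cs.simple i * p) (x * t) := LeT.step h1 ht hl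
      have h3 : cs.simple i * (x * t) = (x * t) * ((x * t)⁻¹ * cs.simple i * (x * t)) := by
        group
      rw [h3]
      apply LeT.step h2
      · have h4 := (cs.isReflection_simple i).conj (x * t)⁻¹
        rwa [inv_inv] at h4
      · rw [← h3]
        exact hr

theorem bruhatLE_leT_aux : ∀ n, ∀ w : W, cs.length w ≤ n → ∀ u, BruhatLE cs u w → LeT cs u w := by
  intro n
  induction n with
  | zero =>
    intro w hw u hb
    obtain ⟨ω, hω, hwp, μ, hsub, hμ, hup⟩ := hb
    have hω0 : ω.length = 0 := by
      have : cs.length (cs.wordProd ω) = ω.length := hω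
      rw [hwp] at this
      omega
    have : ω = [] := List.eq_nil_of_length_eq_zero hω0
    subst this
    have : μ = [] := List.eq_nil_of_length_eq_zero (by have := hsub.length_le; simpa using this)
    subst this
    rw [← hwp, ← hup]
    exact LeT.refl _
  | succ n ih =>
    intro w hw u hb
    obtain ⟨ω, hω, hwp, μ, hsub, hμ, hup⟩ := hb
    cases ω with
    | nil =>
      have : μ = [] := List.eq_nil_of_length_eq_zero (by have := hsub.length_le; simpa using this)
      subst this
      rw [← hwp, ← hup]
      exact LeT.refl _
    | cons a ω' =>
      have hω' : cs.IsReduced ω' := by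
        have h3 : cs.IsReduced ((a :: ω').drop 1) := hω.drop 1
        simpa using h3
      have hlw : cs.length w = cs.length (cs.wordProd ω') + 1 := by
        have e1 : cs.length (cs.wordProd (a :: ω')) = (a :: ω').length := hω
        have e2 : cs.length (cs.wordProd ω') = ω'.length := hω'
        rw [hwp] at e1
        rw [e1, e2, List.length_cons]
      have hsw : cs.wordProd (a :: ω') = cs.simple a * cs.wordProd ω' := cs.wordProd_cons a ω'
      rcases List.sublist_cons_iff.mp hsub with hcase | ⟨μ', rfl, hsub'⟩
      · have hb' : BruhatLE cs u (cs.wordProd ω') := ⟨ω', hω', rfl, μ, hcase, hμ, hup⟩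
        have h1 := ih (cs.wordProd ω') (by omega) u hb'
        have h3 : w = cs.wordProd ω' *
            ((cs.wordProd ω')⁻¹ * cs.simple a * cs.wordProd ω') := by
          rw [← hwp, hsw]; group
        rw [h3]
        apply LeT.step h1
        · have h4 := (cs.isReflection_simple a).conj (cs.wordProd ω')⁻¹
          rwa [inv_inv] at h4
        · rw [← h3]
          omega
      · have hμ' : cs.IsReduced μ' := by
          have h3 : cs.IsReduced ((a :: μ').drop 1) := hμ.drop 1
          simpa using h3
        have hb' : BruhatLE cs (cs.wordProd μ') (cs.wordProd ω') :=
          ⟨ω', hω', rfl, μ', hsub', hμ', rfl⟩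
        have h1 := ih (cs.wordProd ω') (by omega) _ hb'
        have hplen : cs.length (cs.wordProd μ') < cs.length (cs.simple a * cs.wordProd μ') := by
          have e1 : cs.length (cs.wordProd (a :: μ')) = (a :: μ').length := hμ
          have e2 : cs.length (cs.wordProd μ') = μ'.length := hμ'
          rw [cs.wordProd_cons] at e1
          rw [e1, e2]
          simp
        have hrlen : cs.length (cs.wordProd ω') < cs.length (cs.simple a * cs.wordProd ω') := by
          rw [← hsw, hwp]
          omega
        have h2 := liftStepT cs h1 hplen hrlen (fun x u hx hbx => ih x (by omega) u hbx)
        rw [← cs.wordProd_cons a μ', ← cs.wordProd_cons a ω', hup, hwp] at h2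
        exact h2

theorem bruhatLE_leT {u w : W} (h : BruhatLE cs u w) : LeT cs u w :=
  bruhatLE_leT_aux cs (cs.length w) w le_rfl u h

theorem bruhatLE_subword {u w : W} (h : BruhatLE cs u w) {ω : List B}
    (hω : cs.IsReduced ω) (hp : cs.wordProd ω = w) :
    ∃ μ, μ.Sublist ω ∧ cs.IsReduced μ ∧ cs.wordProd μ = u :=
  leT_subword cs (bruhatLE_leT cs h) hω hp

theorem bruhatLE_trans {x y z : W} (h1 : BruhatLE cs x y) (h2 : BruhatLE cs y z) :
    BruhatLE cs x z := by
  obtain ⟨ω, hω, hwp, μ, hsub, hμ, hup⟩ := h2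
  obtain ⟨ν, hν1, hν2, hν3⟩ := bruhatLE_subword cs h1 hμ hup
  exact ⟨ω, hω, hwp, ν, hν1.trans hsub, hν2, hν3⟩

theorem bruhatLE_liftStep {p r : W} {i : B} (h : BruhatLE cs p r)
    (hp : cs.length p < cs.length (cs.simple i * p))
    (hr : cs.length r < cs.length (cs.simple i * r)) :
    BruhatLE cs (cs.simple i * p) (cs.simple i * r) := by
  obtain ⟨ω, hω, hwp, μ, hsub, hμ, hup⟩ := h
  refine ⟨i :: ω, ?_, ?_, i :: μ, hsub.cons₂ i, ?_, ?_⟩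
  · show cs.length (cs.wordProd _) = _
    rw [cs.wordProd_cons, hwp, List.length_cons]
    have e1 : cs.length (cs.wordProd ω) = ω.length := hω
    rw [hwp] at e1
    rcases cs.length_simple_mul r i with h1 | h1 <;> omega
  · rw [cs.wordProd_cons, hwp]
  · show cs.length (cs.wordProd _) = _
    rw [cs.wordProd_cons, hup, List.length_cons]
    have e1 : cs.length (cs.wordProd μ) = μ.length := hμ
    rw [hup] at e1
    rcases cs.length_simple_mul p i with h1 | h1 <;> omega
  · rw [cs.wordProd_cons, hup]

theorem bruhatLE_le_simple_mul {y : W} {i : B} (h : cs.length y < cs.length (cs.simple i * y)) :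
    BruhatLE cs y (cs.simple i * y) := by
  refine ⟨i :: rword cs y, ?_, ?_, rword cs y, List.sublist_cons_self i _,
    rword_isReduced cs y, rword_wordProd cs y⟩
  · show cs.length (cs.wordProd _) = _
    rw [cs.wordProd_cons, rword_wordProd, List.length_cons]
    have e1 : cs.length (cs.wordProd (rword cs y)) = (rword cs y).length := rword_isReduced cs y
    rw [rword_wordProd] at e1
    rcases cs.length_simple_mul y i with h1 | h1 <;> omega
  · rw [cs.wordProd_cons, rword_wordProd]

theorem bruhatLE_liftDesc {p r : W} {i : B} (h : BruhatLE cs p r)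
    (hp : cs.length p < cs.length (cs.simple i * p))
    (hr : cs.length (cs.simple i * r) < cs.length r) :
    BruhatLE cs (cs.simple i * p) r := by
  obtain ⟨hred2, hprod2⟩ := isReduced_cons_of_descent cs hr
  obtain ⟨μ, hμsub, hμred, hμprod⟩ := bruhatLE_subword cs h hred2 hprod2
  rcases List.sublist_cons_iff.mp hμsub with hcase | ⟨μ', rfl, hsub'⟩
  · refine ⟨i :: rword cs (cs.simple i * r), hred2, hprod2, i :: μ, hcase.cons₂ i, ?_, ?_⟩
    · show cs.length (cs.wordProd _) = _
      rw [cs.wordProd_cons, hμprod, List.length_cons]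
      have e1 : cs.length p = μ.length := by rw [← hμprod]; exact hμred
      rcases cs.length_simple_mul p i with h1 | h1 <;> omega
    · rw [cs.wordProd_cons, hμprod]
  · exfalso
    have hμ'red : cs.IsReduced μ' := by
      have h3 : cs.IsReduced ((i :: μ').drop 1) := hμred.drop 1
      simpa using h3
    have h4 : cs.wordProd μ' = cs.simple i * p := by
      rw [← hμprod, cs.wordProd_cons, cs.simple_mul_simple_cancel_left]
    have h5 : cs.length (cs.simple i * p) = μ'.length := by rw [← h4]; exact hμ'red
    have h6 : cs.length p = μ'.length + 1 := by
      have h7 : cs.length (cs.wordProd (i :: μ')) = (i :: μ').length := hμred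
      rw [hμprod] at h7
      simpa using h7
    omega

theorem bruhatLE_of_reflection_descent {w t : W} (ht : cs.IsReflection t)
    (h : cs.length (w * t) < cs.length w) : BruhatLE cs (w * t) w := by
  have h1 : cs.length (cs.wordProd (rword cs w) * t) < cs.length (cs.wordProd (rword cs w)) := by
    rw [rword_wordProd]; exact h
  obtain ⟨j, hj, heq⟩ := rightExchange cs ht h1
  obtain ⟨κ, h2, h3, h4⟩ := exists_reduced_sublist cs ((rword cs w).eraseIdx j)
  refine ⟨rword cs w, rword_isReduced cs w, rword_wordProd cs w, κ,
    h2.trans (List.eraseIdx_sublist _ j), h3, ?_⟩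
  rw [h4, ← heq, rword_wordProd]

theorem bruhatLE_lemmaL {x v : W} {j : B}
    (h1 : cs.length x < cs.length (x * cs.simple j))
    (h2 : cs.length (cs.simple j * v) < cs.length v) :
    BruhatLE cs (x * (cs.simple j * v)) (x * v) := by
  set t := v⁻¹ * cs.simple j * v with hdef
  have ht : cs.IsReflection t := by
    have h3 := (cs.isReflection_simple j).conj v⁻¹
    rwa [inv_inv] at h3
  have hη : etaR cs (x * v) t = -1 := by
    rw [etaR_mul]
    have hv : v * t * v⁻¹ = cs.simple j := by rw [hdef]; group
    rw [hv]
    have hx : etaR cs x (cs.simple j) = 1 := by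
      rcases Int.units_eq_one_or (etaR cs x (cs.simple j)) with h | h
      · exact h
      · exfalso
        have := (etaR_neg_iff cs (cs.isReflection_simple j) x).mp h
        omega
    have hvt : etaR cs v t = -1 := by
      apply (etaR_neg_iff cs ht v).mpr
      have hvt2 : v * t = cs.simple j * v := by rw [hdef]; group
      rw [hvt2]
      exact h2
    rw [hx, hvt, one_mul]
  have hlen : cs.length ((x * v) * t) < cs.length (x * v) := descent_of_etaR cs hη
  have hxvt : (x * v) * t = x * (cs.simple j * v) := by rw [hdef]; group
  rw [← hxvt]
  exact bruhatLE_of_reflection_descent cs ht hlen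

/-! ### Monotonicity of the up-operators -/

theorem bruhatLE_lop_mono {p q : W} (i : B) (h : BruhatLE cs p q) :
    BruhatLE cs (if cs.length p < cs.length (cs.simple i * p) then cs.simple i * p else p)
      (if cs.length q < cs.length (cs.simple i * q) then cs.simple i * q else q) := by
  by_cases hp : cs.length p < cs.length (cs.simple i * p) <;>
    by_cases hq : cs.length q < cs.length (cs.simple i * q)
  · rw [if_pos hp, if_pos hq]
    exact bruhatLE_liftStep cs h hp hq
  · rw [if_pos hp, if_neg hq]
    exact bruhatLE_liftDesc cs h hp (by rcases cs.length_simple_mul q i with h1 | h1 <;> omega)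
  · rw [if_neg hp, if_pos hq]
    exact bruhatLE_trans cs h (bruhatLE_le_simple_mul cs hq)
  · rw [if_neg hp, if_neg hq]
    exact h

theorem upLWord_cons (i : B) (ω : List B) (v : W) :
    upLWord cs (i :: ω) v =
      (if cs.length (upLWord cs ω v) < cs.length (cs.simple i * upLWord cs ω v)
        then cs.simple i * upLWord cs ω v else upLWord cs ω v) := rfl

theorem upLWord_append (ω₁ ω₂ : List B) (v : W) :
    upLWord cs (ω₁ ++ ω₂) v = upLWord cs ω₁ (upLWord cs ω₂ v) := by
  unfold upLWord
  rw [List.foldr_append]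

theorem upLWord_mono {p q : W} (h : BruhatLE cs p q) (ω : List B) :
    BruhatLE cs (upLWord cs ω p) (upLWord cs ω q) := by
  induction ω with
  | nil => exact h
  | cons i ω ih => exact bruhatLE_lop_mono cs i ih

/-! ### The Demazure product: associativity of up-operators -/

theorem lemmaX {w : W} {i j : B}
    (hA : cs.length w < cs.length (cs.simple i * w))
    (hB : cs.length w < cs.length (w * cs.simple j))
    (hC : cs.length (cs.simple i * w * cs.simple j) < cs.length (cs.simple i * w)) :
    cs.simple i * w = w * cs.simple j := by
  set ρ := rword cs w with hρ
  have hred : cs.IsReduced (i :: ρ) := by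
    show cs.length (cs.wordProd _) = _
    rw [cs.wordProd_cons, rword_wordProd, List.length_cons]
    have e1 : cs.length (cs.wordProd ρ) = ρ.length := rword_isReduced cs w
    rw [rword_wordProd] at e1
    rcases cs.length_simple_mul w i with h1 | h1 <;> omega
  have hprod : cs.wordProd (i :: ρ) = cs.simple i * w := by
    rw [cs.wordProd_cons, rword_wordProd]
  have hlt : cs.length (cs.wordProd (i :: ρ) * cs.simple j) < cs.length (cs.wordProd (i :: ρ)) := by
    rw [hprod]
    exact hC
  obtain ⟨c, hc, heq⟩ := rightExchange cs (cs.isReflection_simple j) hlt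
  rw [hprod] at heq
  cases c with
  | zero =>
    rw [List.eraseIdx_cons_zero, rword_wordProd] at heq
    calc cs.simple i * w = (cs.simple i * w * cs.simple j) * cs.simple j := by
          rw [mul_assoc (cs.simple i * w), cs.simple_mul_simple_self, mul_one]
      _ = w * cs.simple j := by rw [heq]
  | succ c =>
    exfalso
    rw [List.eraseIdx_cons_succ, cs.wordProd_cons] at heq
    have h1 : w * cs.simple j = cs.wordProd (ρ.eraseIdx c) := by
      have h2 : cs.simple i * (cs.simple i * w * cs.simple j) = w * cs.simple j := by
        calc cs.simple i * (cs.simple i * w * cs.simple j)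
            = (cs.simple i * cs.simple i) * w * cs.simple j := by group
          _ = w * cs.simple j := by rw [cs.simple_mul_simple_self]; group
      rw [← h2, heq, cs.simple_mul_simple_cancel_left]
    have h3 : cs.length (w * cs.simple j) ≤ (ρ.eraseIdx c).length := by
      rw [h1]
      exact cs.length_wordProd_le _
    have h4 : c < ρ.length := by
      simp at hc
      omega
    have h5 : (ρ.eraseIdx c).length + 1 = ρ.length := List.length_eraseIdx_add_one h4
    have h6 : cs.length w = ρ.length := by
      have e1 : cs.length (cs.wordProd ρ) = ρ.length := rword_isReduced cs w
      rw [rword_wordProd] at e1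
      exact e1
    omega

theorem lop_rop_comm (i j : B) (x : W) :
    (fun y => if cs.length y < cs.length (cs.simple i * y) then cs.simple i * y else y)
      (if cs.length x < cs.length (x * cs.simple j) then x * cs.simple j else x) =
    (fun y => if cs.length y < cs.length (y * cs.simple j) then y * cs.simple j else y)
      (if cs.length x < cs.length (cs.simple i * x) then cs.simple i * x else x) := by
  simp only
  by_cases hA : cs.length x < cs.length (cs.simple i * x) <;>
    by_cases hB : cs.length x < cs.length (x * cs.simple j)
  · -- both ascents
    rw [if_pos hB, if_pos hA]
    have hA1 : cs.length (cs.simple i * x) = cs.length x + 1 := by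
      rcases cs.length_simple_mul x i with h1 | h1 <;> omega
    have hB1 : cs.length (x * cs.simple j) = cs.length x + 1 := by
      rcases cs.length_mul_simple x j with h1 | h1 <;> omega
    by_cases hC : cs.length (cs.simple i * x) < cs.length ((cs.simple i * x) * cs.simple j)
    · have hC1 : cs.length (cs.simple i * x * cs.simple j) = cs.length x + 2 := by
        rcases cs.length_mul_simple (cs.simple i * x) j with h1 | h1 <;> omega
      have hD : cs.length (x * cs.simple j) < cs.length (cs.simple i * (x * cs.simple j)) := by
        rw [← mul_assoc]
        omega
      rw [if_pos hD, if_pos hC, mul_assoc]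
    · have hC1 : cs.length (cs.simple i * x * cs.simple j) < cs.length (cs.simple i * x) := by
        rcases cs.length_mul_simple (cs.simple i * x) j with h1 | h1 <;> omega
      have hX := lemmaX cs hA hB hC1
      have hD : ¬ cs.length (x * cs.simple j) < cs.length (cs.simple i * (x * cs.simple j)) := by
        rw [← mul_assoc, ← hX]
        omega
      rw [if_neg hD, if_neg hC, hX]
  · -- i-ascent, j-descent
    rw [if_neg hB, if_pos hA]
    have hB1 : cs.length (x * cs.simple j) + 1 = cs.length x := by
      rcases cs.length_mul_simple x j with h1 | h1 <;> omega
    have hA1 : cs.length (cs.simple i * x) = cs.length x + 1 := by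
      rcases cs.length_simple_mul x i with h1 | h1 <;> omega
    have hD : ¬ cs.length (cs.simple i * x) < cs.length ((cs.simple i * x) * cs.simple j) := by
      have h1 : cs.length (cs.simple i * x * cs.simple j) ≤ cs.length (x * cs.simple j) + 1 := by
        rw [mul_assoc]
        rcases cs.length_simple_mul (x * cs.simple j) i with h2 | h2 <;> omega
      omega
    rw [if_neg hD]
  · -- i-descent, j-ascent
    rw [if_pos hB, if_neg hA]
    have hA1 : cs.length (cs.simple i * x) + 1 = cs.length x := by
      rcases cs.length_simple_mul x i with h1 | h1 <;> omega
    have hB1 : cs.length (x * cs.simple j) = cs.length x + 1 := by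
      rcases cs.length_mul_simple x j with h1 | h1 <;> omega
    have hD : ¬ cs.length (x * cs.simple j) < cs.length (cs.simple i * (x * cs.simple j)) := by
      have h1 : cs.length (cs.simple i * x * cs.simple j) ≤ cs.length (cs.simple i * x) + 1 := by
        rcases cs.length_mul_simple (cs.simple i * x) j with h2 | h2 <;> omega
      rw [← mul_assoc]
      omega
    rw [if_neg hD, if_pos hB]
  · -- both descents
    rw [if_neg hB, if_neg hA, if_neg hB]

theorem upRWord_cons (v : W) (j : B) (ω : List B) :
    upRWord cs v (j :: ω) =
      upRWord cs (if cs.length v < cs.length (v * cs.simple j) then v * cs.simple j else v) ω :=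
  rfl

theorem lop_upRWord (i : B) (x : W) (ρ : List B) :
    (if cs.length (upRWord cs x ρ) < cs.length (cs.simple i * upRWord cs x ρ)
      then cs.simple i * upRWord cs x ρ else upRWord cs x ρ) =
    upRWord cs (if cs.length x < cs.length (cs.simple i * x) then cs.simple i * x else x) ρ := by
  induction ρ generalizing x with
  | nil => rfl
  | cons j ρ ih =>
    rw [upRWord_cons, upRWord_cons, ih]
    congr 1
    exact lop_rop_comm cs i j x

theorem upLWord_upRWord (ω : List B) (x : W) (ρ : List B) :
    upLWord cs ω (upRWord cs x ρ) = upRWord cs (upLWord cs ω x) ρ := by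
  induction ω with
  | nil => rfl
  | cons i ω ih =>
    rw [upLWord_cons, upLWord_cons, ih, lop_upRWord]

theorem upRWord_one_eq (κ ρ : List B) (h : cs.IsReduced (κ ++ ρ)) :
    upRWord cs (cs.wordProd κ) ρ = cs.wordProd (κ ++ ρ) := by
  induction ρ generalizing κ with
  | nil => rw [List.append_nil]; rfl
  | cons j ρ ih =>
    have hred : cs.IsReduced ((κ ++ [j]) ++ ρ) := by
      rwa [List.append_assoc, List.singleton_append]
    have hκj : cs.IsReduced (κ ++ [j]) := by
      have h1 := hred.take (κ ++ [j]).length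
      rwa [List.take_left] at h1
    have hκ : cs.IsReduced κ := by
      have h1 := hκj.take κ.length
      rwa [List.take_left] at h1
    have hasc : cs.length (cs.wordProd κ) < cs.length (cs.wordProd κ * cs.simple j) := by
      have e1 : cs.length (cs.wordProd κ) = κ.length := hκ
      have e2 : cs.length (cs.wordProd (κ ++ [j])) = κ.length + 1 := by
        have := hκj
        show cs.length (cs.wordProd (κ ++ [j])) = _
        rw [this]
        simp
      rw [cs.wordProd_append] at e2
      simp [cs.wordProd_cons, wordProd_nil] at e2
      omega
    rw [upRWord_cons, if_pos hasc]
    have e3 : cs.wordProd κ * cs.simple j = cs.wordProd (κ ++ [j]) := by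
      rw [cs.wordProd_append]
      simp [cs.wordProd_cons, wordProd_nil]
    rw [e3, ih (κ ++ [j]) hred, List.append_assoc, List.singleton_append]

theorem upLWord_one (ω : List B) (h : cs.IsReduced ω) : upLWord cs ω 1 = cs.wordProd ω := by
  induction ω with
  | nil => rfl
  | cons i ω ih =>
    have hω : cs.IsReduced ω := by
      have h3 : cs.IsReduced ((i :: ω).drop 1) := h.drop 1
      simpa using h3
    rw [upLWord_cons, ih hω]
    have hasc : cs.length (cs.wordProd ω) < cs.length (cs.simple i * cs.wordProd ω) := by
      have e1 : cs.length (cs.wordProd ω) = ω.length := hω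
      have e2 : cs.length (cs.wordProd (i :: ω)) = ω.length + 1 := by
        have := h
        show cs.length (cs.wordProd (i :: ω)) = _
        rw [this]
        simp
      rw [cs.wordProd_cons] at e2
      omega
    rw [if_pos hasc, cs.wordProd_cons]

theorem upLWord_eq_dem (ω : List B) (h : cs.IsReduced ω) (v : W) :
    upLWord cs ω v = dem cs (cs.wordProd ω) v := by
  have h1 : v = upRWord cs (cs.wordProd ([] : List B)) (rword cs v) := by
    rw [upRWord_one_eq cs [] (rword cs v) (by simpa using rword_isReduced cs v)]
    simp [rword_wordProd]
  conv_lhs => rw [h1]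
  rw [upLWord_upRWord]
  unfold dem
  congr 1
  have h2 : upLWord cs ω (cs.wordProd ([] : List B)) = upLWord cs ω 1 := by
    simp [wordProd_nil]
  rw [h2, upLWord_one cs ω h]

/-! ### Positivity of polynomials in `q - 1` -/

def Pos (p : Polynomial ℤ) : Prop := ∀ n, 0 ≤ (p.comp (X + 1)).coeff n

theorem pos_zero : Pos 0 := by intro n; simp

theorem pos_one : Pos 1 := by
  intro n
  rw [one_comp, coeff_one]
  split_ifs <;> norm_num

theorem pos_X : Pos X := by
  intro n
  rw [X_comp, coeff_add, coeff_X, coeff_one]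
  split_ifs <;> norm_num

theorem pos_X_sub_one : Pos (X - 1) := by
  intro n
  have h : ((X : Polynomial ℤ) - 1).comp (X + 1) = X := by
    rw [sub_comp, X_comp, one_comp]
    ring
  rw [h, coeff_X]
  split_ifs <;> norm_num

theorem Pos.add {p q : Polynomial ℤ} (hp : Pos p) (hq : Pos q) : Pos (p + q) := by
  intro n
  rw [add_comp, coeff_add]
  exact add_nonneg (hp n) (hq n)

theorem Pos.mul {p q : Polynomial ℤ} (hp : Pos p) (hq : Pos q) : Pos (p * q) := by
  intro n
  rw [mul_comp, coeff_mul]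
  apply Finset.sum_nonneg
  intro x _
  exact mul_nonneg (hp x.1) (hq x.2)

theorem eq_zero_of_comp_X_add_one_eq_zero {p : Polynomial ℤ} (h : p.comp (X + 1) = 0) :
    p = 0 := by
  have h1 : (p.comp (X + 1)).comp (X - 1) = p := by
    rw [comp_assoc]
    have h2 : ((X : Polynomial ℤ) + 1).comp (X - 1) = X := by
      rw [add_comp, X_comp, one_comp]
      ring
    rw [h2, comp_X]
  rw [h, zero_comp] at h1
  exact h1.symm

theorem Pos.add_eq_zero {p q : Polynomial ℤ} (hp : Pos p) (hq : Pos q) (h : p + q = 0) :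
    p = 0 ∧ q = 0 := by
  have hcomp : p.comp (X + 1) + q.comp (X + 1) = 0 := by
    rw [← add_comp, h, zero_comp]
  have hp0 : p.comp (X + 1) = 0 := by
    apply Polynomial.ext
    intro n
    have h2 := congrArg (fun r => coeff r n) hcomp
    simp only [coeff_add, coeff_zero] at h2
    have := hp n
    have := hq n
    simp only [coeff_zero]
    omega
  have hq0 : q.comp (X + 1) = 0 := by
    rw [hp0, zero_add] at hcomp
    exact hcomp
  exact ⟨eq_zero_of_comp_X_add_one_eq_zero hp0, eq_zero_of_comp_X_add_one_eq_zero hq0⟩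

theorem Pos.mul_eq_zero_iff {p c : Polynomial ℤ} (hc : c ≠ 0) : c * p = 0 ↔ p = 0 := by
  constructor
  · intro h
    rcases mul_eq_zero.mp h with h1 | h1
    · exact absurd h1 hc
    · exact h1
  · intro h; rw [h, mul_zero]

theorem X_ne_zero' : (X : Polynomial ℤ) ≠ 0 := X_ne_zero

theorem X_sub_one_ne_zero : (X : Polynomial ℤ) - 1 ≠ 0 := by
  intro h
  have h2 := congrArg (fun p => coeff p 1) h
  simp [coeff_sub, coeff_X, coeff_one] at h2

/-! ### The Hecke multiplication: coefficient formula -/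

theorem heckeMulSimple_zero (i : B) : heckeMulSimple cs i 0 = 0 := by
  unfold heckeMulSimple
  exact Finsupp.sum_zero_index

theorem heckeMulSimple_add (i : B) (f g : W →₀ Polynomial ℤ) :
    heckeMulSimple cs i (f + g) = heckeMulSimple cs i f + heckeMulSimple cs i g := by
  unfold heckeMulSimple
  apply Finsupp.sum_add_index'
  · intro w
    split_ifs <;> simp
  · intro w b₁ b₂
    split_ifs <;> simp [Finsupp.single_add, mul_add] <;> abel

theorem heckeMulSimple_single (i : B) (w : W) (c : Polynomial ℤ) :
    heckeMulSimple cs i (Finsupp.single w c) =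
      if cs.length w < cs.length (cs.simple i * w)
      then Finsupp.single (cs.simple i * w) c
      else Finsupp.single w ((X - 1) * c) + Finsupp.single (cs.simple i * w) (X * c) := by
  unfold heckeMulSimple
  apply Finsupp.sum_single_index
  split_ifs <;> simp

theorem simple_mul_ne (i : B) (z : W) : cs.simple i * z ≠ z := by
  intro h
  have := cs.length_simple_mul_ne z i
  rw [h] at this
  exact this rfl

theorem heckeMulSimple_apply (i : B) (f : W →₀ Polynomial ℤ) (z : W) :
    heckeMulSimple cs i f z =
      if cs.length (cs.simple i * z) < cs.length z
      then f (cs.simple i * z) + (X - 1) * f z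
      else X * f (cs.simple i * z) := by
  induction f using Finsupp.induction with
  | zero => rw [heckeMulSimple_zero]; split_ifs <;> simp
  | single_add w c f hw hc ih =>
    rw [heckeMulSimple_add, Finsupp.add_apply, ih, heckeMulSimple_single]
    have hzz : cs.simple i * z ≠ z := simple_mul_ne cs i z
    have hcan : cs.simple i * (cs.simple i * z) = z := cs.simple_mul_simple_cancel_left i
    by_cases hz : cs.length (cs.simple i * z) < cs.length z
    · rw [if_pos hz, if_pos hz]
      by_cases hw1 : w = z
      · subst hw1
        rw [if_neg (by omega : ¬ cs.length w < cs.length (cs.simple i * w))]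
        simp [Finsupp.single_apply, hzz, Ne.symm hzz]
        try ring
      · by_cases hw2 : w = cs.simple i * z
        · subst hw2
          rw [if_pos (by rw [hcan]; exact hz)]
          simp [Finsupp.single_apply, hcan, hzz, Ne.symm hzz, hw1]
          try ring
        · have hsw : cs.simple i * w ≠ z := by
            intro h
            apply hw2
            rw [← h, ← mul_assoc, cs.simple_mul_simple_self, one_mul]
          split_ifs with hlw <;>
            · simp [Finsupp.single_apply, hw1, hw2, hsw]
              try ring
    · rw [if_neg hz, if_neg hz]
      have hz' : cs.length z < cs.length (cs.simple i * z) := by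
        rcases cs.length_simple_mul z i with h1 | h1 <;> omega
      by_cases hw1 : w = z
      · subst hw1
        rw [if_pos hz']
        simp [Finsupp.single_apply, hzz, Ne.symm hzz]
        try ring
      · by_cases hw2 : w = cs.simple i * z
        · subst hw2
          rw [if_neg (by rw [hcan]; omega : ¬ cs.length (cs.simple i * z) < cs.length (cs.simple i * (cs.simple i * z)))]
          simp [Finsupp.single_apply, hcan, hzz, Ne.symm hzz, hw1]
          try ring
        · have hsw : cs.simple i * w ≠ z := by
            intro h
            apply hw2
            rw [← h, ← mul_assoc, cs.simple_mul_simple_self, one_mul]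
          split_ifs with hlw <;>
            · simp [Finsupp.single_apply, hw1, hw2, hsw]

/-! ### Positivity and support recursion for the Hecke action -/

def PosF (f : W →₀ Polynomial ℤ) : Prop := ∀ w, Pos (f w)

theorem posF_heckeMulSimple {f : W →₀ Polynomial ℤ} (hf : PosF f) (i : B) :
    PosF (heckeMulSimple cs i f) := by
  intro z
  rw [heckeMulSimple_apply]
  split_ifs
  · exact (hf _).add (pos_X_sub_one.mul (hf z))
  · exact pos_X.mul (hf _)

theorem posF_single_one (v : W) : PosF (Finsupp.single v (1 : Polynomial ℤ)) := by
  intro w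
  rw [Finsupp.single_apply]
  split_ifs
  exacts [pos_one, pos_zero]

theorem heckeMulWord_append' (ω₁ ω₂ : List B) (f : W →₀ Polynomial ℤ) :
    heckeMulWord cs (ω₁ ++ ω₂) f = heckeMulWord cs ω₁ (heckeMulWord cs ω₂ f) := by
  unfold heckeMulWord
  rw [List.foldr_append]

theorem posF_heckeMulWord {f : W →₀ Polynomial ℤ} (hf : PosF f) (ω : List B) :
    PosF (heckeMulWord cs ω f) := by
  induction ω with
  | nil => exact hf
  | cons i ω ih => exact posF_heckeMulSimple cs ih i

theorem heckeMulSimple_smul (i : B) (c : Polynomial ℤ) (f : W →₀ Polynomial ℤ) :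
    heckeMulSimple cs i (c • f) = c • heckeMulSimple cs i f := by
  apply Finsupp.ext
  intro z
  simp only [heckeMulSimple_apply, Finsupp.smul_apply, smul_eq_mul]
  split_ifs <;> ring

theorem heckeMulWord_add (ω : List B) (f g : W →₀ Polynomial ℤ) :
    heckeMulWord cs ω (f + g) = heckeMulWord cs ω f + heckeMulWord cs ω g := by
  induction ω with
  | nil => rfl
  | cons i ω ih =>
    show heckeMulSimple cs i (heckeMulWord cs ω (f + g)) = _
    rw [ih, heckeMulSimple_add]
    rfl

theorem heckeMulWord_smul (ω : List B) (c : Polynomial ℤ) (f : W →₀ Polynomial ℤ) :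
    heckeMulWord cs ω (c • f) = c • heckeMulWord cs ω f := by
  induction ω with
  | nil => rfl
  | cons i ω ih =>
    show heckeMulSimple cs i (heckeMulWord cs ω (c • f)) = _
    rw [ih, heckeMulSimple_smul]
    rfl

theorem mem_support_smul_add_smul (F₁ F₂ : W →₀ Polynomial ℤ) (h₁ : PosF F₁) (h₂ : PosF F₂)
    (z : W) :
    z ∈ (((X : Polynomial ℤ) - 1) • F₁ + (X : Polynomial ℤ) • F₂).support ↔
      z ∈ F₁.support ∨ z ∈ F₂.support := by
  rw [Finsupp.mem_support_iff, Finsupp.mem_support_iff, Finsupp.mem_support_iff,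
    Finsupp.add_apply, Finsupp.smul_apply, Finsupp.smul_apply, smul_eq_mul, smul_eq_mul]
  constructor
  · intro h
    by_contra hc
    push_neg at hc
    rw [hc.1, hc.2, mul_zero, mul_zero, add_zero] at h
    exact h rfl
  · intro h hc
    obtain ⟨e1, e2⟩ := Pos.add_eq_zero (pos_X_sub_one.mul (h₁ z)) (pos_X.mul (h₂ z)) hc
    rcases h with h | h
    · exact h ((Pos.mul_eq_zero_iff X_sub_one_ne_zero).mp e1)
    · exact h ((Pos.mul_eq_zero_iff X_ne_zero').mp e2)

/-! ### The main induction -/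

theorem main_aux (ω : List B) : cs.IsReduced ω → ∀ v : W,
    (cs.wordProd ω * v ∈ (heckeMulWord cs ω (Finsupp.single v 1)).support ∧
      ∀ z ∈ (heckeMulWord cs ω (Finsupp.single v 1)).support,
        BruhatLE cs (cs.wordProd ω * v) z) ∧
    (upLWord cs ω v ∈ (heckeMulWord cs ω (Finsupp.single v 1)).support ∧
      ∀ z ∈ (heckeMulWord cs ω (Finsupp.single v 1)).support,
        BruhatLE cs z (upLWord cs ω v)) := by
  induction ω using List.reverseRecOn with
  | nil =>
    intro _ v
    have hsupp : (heckeMulWord cs [] (Finsupp.single v (1 : Polynomial ℤ))).support = {v} := by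
      show (Finsupp.single v (1 : Polynomial ℤ)).support = {v}
      exact Finsupp.support_single_ne_zero v one_ne_zero
    have hv : cs.wordProd [] * v = v := by rw [wordProd_nil, one_mul]
    have hu : upLWord cs [] v = v := rfl
    rw [hsupp, hv, hu]
    refine ⟨⟨Finset.mem_singleton_self v, ?_⟩, Finset.mem_singleton_self v, ?_⟩ <;>
      · intro z hz
        rw [Finset.mem_singleton] at hz
        subst hz
        exact bruhatLE_refl cs _
  | append_singleton κ t ih =>
    intro hred v
    have hκ : cs.IsReduced κ := by
      have h1 := hred.take κ.length
      rwa [List.take_left] at h1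
    have hπ : cs.wordProd (κ ++ [t]) = cs.wordProd κ * cs.simple t := by
      rw [cs.wordProd_append, cs.wordProd_cons, wordProd_nil, mul_one]
    have hasc : cs.length (cs.wordProd κ) < cs.length (cs.wordProd κ * cs.simple t) := by
      have e1 : cs.length (cs.wordProd κ) = κ.length := hκ
      have e2 : cs.length (cs.wordProd (κ ++ [t])) = κ.length + 1 := by
        have e3 : cs.length (cs.wordProd (κ ++ [t])) = (κ ++ [t]).length := hred
        rw [e3]
        simp
      rw [hπ] at e2
      omega
    have hrw : heckeMulWord cs (κ ++ [t]) (Finsupp.single v (1 : Polynomial ℤ)) =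
        heckeMulWord cs κ (heckeMulSimple cs t (Finsupp.single v 1)) := by
      rw [heckeMulWord_append']
      rfl
    by_cases hv : cs.length v < cs.length (cs.simple t * v)
    · -- ascent for v
      have hstep : heckeMulSimple cs t (Finsupp.single v (1 : Polynomial ℤ)) =
          Finsupp.single (cs.simple t * v) 1 := by
        rw [heckeMulSimple_single, if_pos hv]
      rw [hrw, hstep]
      obtain ⟨⟨hmem1, hmin⟩, hmem2, hmax⟩ := ih hκ (cs.simple t * v)
      have hprod : cs.wordProd (κ ++ [t]) * v = cs.wordProd κ * (cs.simple t * v) := by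
        rw [hπ, mul_assoc]
      have hup : upLWord cs (κ ++ [t]) v = upLWord cs κ (cs.simple t * v) := by
        rw [upLWord_append]
        congr 1
        show (if cs.length v < cs.length (cs.simple t * v) then cs.simple t * v else v) = _
        rw [if_pos hv]
      rw [hprod, hup]
      exact ⟨⟨hmem1, hmin⟩, hmem2, hmax⟩
    · -- descent for v
      have hv' : cs.length (cs.simple t * v) < cs.length v := by
        rcases cs.length_simple_mul v t with h1 | h1 <;> omega
      have hstep : heckeMulSimple cs t (Finsupp.single v (1 : Polynomial ℤ)) =
          ((X : Polynomial ℤ) - 1) • Finsupp.single v (1 : Polynomial ℤ) +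
            (X : Polynomial ℤ) • Finsupp.single (cs.simple t * v) (1 : Polynomial ℤ) := by
        rw [heckeMulSimple_single, if_neg hv]
        rw [Finsupp.smul_single, Finsupp.smul_single, smul_eq_mul, smul_eq_mul]
      rw [hrw, hstep, heckeMulWord_add, heckeMulWord_smul, heckeMulWord_smul]
      set F₁ := heckeMulWord cs κ (Finsupp.single v (1 : Polynomial ℤ)) with hF₁
      set F₂ := heckeMulWord cs κ (Finsupp.single (cs.simple t * v) (1 : Polynomial ℤ)) with hF₂
      have hpos₁ : PosF F₁ := posF_heckeMulWord cs (posF_single_one v) κ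
      have hpos₂ : PosF F₂ := posF_heckeMulWord cs (posF_single_one _) κ
      have hsupp := mem_support_smul_add_smul F₁ F₂ hpos₁ hpos₂
      obtain ⟨⟨hmem1, hmin1⟩, hmem2, hmax2⟩ := ih hκ v
      obtain ⟨⟨hmem1', hmin1'⟩, hmem2', hmax2'⟩ := ih hκ (cs.simple t * v)
      have hprod : cs.wordProd (κ ++ [t]) * v = cs.wordProd κ * (cs.simple t * v) := by
        rw [hπ, mul_assoc]
      have hup : upLWord cs (κ ++ [t]) v = upLWord cs κ v := by
        rw [upLWord_append]
        congr 1
        show (if cs.length v < cs.length (cs.simple t * v) then cs.simple t * v else v) = _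
        rw [if_neg hv]
      have hL : BruhatLE cs (cs.wordProd κ * (cs.simple t * v)) (cs.wordProd κ * v) :=
        bruhatLE_lemmaL cs hasc hv'
      have hstv : BruhatLE cs (cs.simple t * v) v := by
        have h1 : cs.length (cs.simple t * v) <
            cs.length (cs.simple t * (cs.simple t * v)) := by
          rw [cs.simple_mul_simple_cancel_left]
          exact hv'
        have h2 := bruhatLE_le_simple_mul cs h1
        rwa [cs.simple_mul_simple_cancel_left] at h2
      constructor
      · constructor
        · rw [hprod, hsupp]
          exact Or.inr hmem1'
        · intro z hz
          rw [hsupp] at hz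
          rw [hprod]
          rcases hz with hz | hz
          · exact bruhatLE_trans cs hL (hmin1 z hz)
          · exact hmin1' z hz
      · constructor
        · rw [hup, hsupp]
          exact Or.inl hmem2
        · intro z hz
          rw [hsupp] at hz
          rw [hup]
          rcases hz with hz | hz
          · exact hmax2 z hz
          · exact bruhatLE_trans cs (hmax2' z hz) (upLWord_mono cs hstv κ)


/-- The support of `T_u T_v` has unique minimal element `uv` and unique maximal element
`u ∘ v` with respect to the strong Bruhat order. -/
theorem stmt13 [Finite W] (u v : W) :
    (u * v ∈ (TT cs u v).support ∧ ∀ z ∈ (TT cs u v).support, BruhatLE cs (u * v) z) ∧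
    (dem cs u v ∈ (TT cs u v).support ∧ ∀ z ∈ (TT cs u v).support, BruhatLE cs z (dem cs u v)) := by
  have h1 := main_aux cs (rword cs u) (rword_isReduced cs u) v
  rw [rword_wordProd] at h1
  have h2 : upLWord cs (rword cs u) v = dem cs u v := by
    have h3 := upLWord_eq_dem cs (rword cs u) (rword_isReduced cs u) v
    rwa [rword_wordProd] at h3
  rw [h2] at h1
  exact h1



end PaperBase
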